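/- Let X : Ω → ℝᵖ be square-integrable with E[X] = 0 and positive definite covariance matrix Σ = E[XXᵀ], Y : Ω → ℝ measurable, and let Z : Ω → ℝᵖ be a square-integrable version of E[X | σ(Y)]. Set A_IR = Σ⁻¹E[ZZᵀ]Σ⁻¹. Let ξ be a real p×d matrix whose column space equals the column space of A_IR, with ξᵀΣξ invertible, and assume E[X | σ(ξᵀX)] = P_ξ(Σ)ᵀ X P-almost everywhere. Then E[X | σ(Y)] = E[ E[X | σ(ξᵀX)] | σ(Y) ] P-almost everywhere, i.e., ξ solves the inverse regression equation. (Theorem 2.1, part 2: the inclusion S_CSS ⊆ S_IR.) -/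

import Mathlib

/-!
Write `P = ξ(ξᵀΣξ)⁻¹ξᵀΣ` and `M = E[ZZᵀ] = Σ A_IR Σ`. Since `P` fixes the column space of `ξ`,
which contains that of `A_IR`, and `Pᵀ Σ = Σ P` (self-adjointness for `⟨a, b⟩ = aᵀΣb`), we get
`Pᵀ M = M`. For every row `b` of `I - Pᵀ` this gives `E[(bᵀZ)²] = bᵀMb = 0`, hence `Z = PᵀZ` a.e.
Therefore `E[X|Y] = Pᵀ E[X|Y] = E[PᵀX|Y] = E[E[X|ξᵀX]|Y]` by the linear conditional mean.
-/

open MeasureTheory ProbabilityTheory Matrix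

namespace Matrix

variable {n m : Type*} [Fintype n] [Fintype m] [DecidableEq m]

/-- The paper's `P_ξ(Σ)`. -/
noncomputable def weightedProj (S : Matrix n n ℝ) (ξ : Matrix n m ℝ) : Matrix n n ℝ :=
  ξ * (ξᵀ * S * ξ)⁻¹ * ξᵀ * S

variable {S : Matrix n n ℝ} {ξ : Matrix n m ℝ}

theorem weightedProj_mul_self (hξ : IsUnit (ξᵀ * S * ξ).det) : weightedProj S ξ * ξ = ξ := by
  simp only [weightedProj, Matrix.mul_assoc]
  rw [← Matrix.mul_assoc ξᵀ, nonsing_inv_mul _ hξ, Matrix.mul_one]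

theorem weightedProj_mul_of_range_le [DecidableEq n] (hξ : IsUnit (ξᵀ * S * ξ).det)
    {A : Matrix n n ℝ} (hA : LinearMap.range A.mulVecLin ≤ LinearMap.range ξ.mulVecLin) :
    weightedProj S ξ * A = A := by
  refine toLin'.injective (LinearMap.ext fun v => ?_)
  obtain ⟨c, hc⟩ := hA ⟨v, rfl⟩
  simp only [mulVecLin_apply] at hc
  rw [toLin'_apply, toLin'_apply, ← mulVec_mulVec, ← hc, mulVec_mulVec, weightedProj_mul_self hξ]

theorem transpose_weightedProj_mul (hS : S.IsSymm) :
    (weightedProj S ξ)ᵀ * S = S * weightedProj S ξ := by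
  have hK : ((ξᵀ * S * ξ)⁻¹)ᵀ = (ξᵀ * S * ξ)⁻¹ := by
    rw [transpose_nonsing_inv, transpose_mul, transpose_mul, transpose_transpose, hS.eq,
      Matrix.mul_assoc]
  rw [weightedProj, transpose_mul, transpose_mul, transpose_mul, transpose_transpose, hS.eq, hK]
  simp only [Matrix.mul_assoc]

end Matrix

section SecondMoment

variable {Ω n m : Type*} [MeasurableSpace Ω] {μ : Measure Ω} [Fintype n] [Fintype m]

noncomputable def secondMoment (μ : Measure Ω) (Z : Ω → n → ℝ) : Matrix n n ℝ :=
  Matrix.of fun i j => ∫ ω, Z ω i * Z ω j ∂μ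

variable {Z : Ω → n → ℝ}

theorem integrable_mul_apply_of_memLp (hZ : MemLp Z 2 μ) (i j : n) :
    Integrable (fun ω => Z ω i * Z ω j) μ := by
  have hcoord : ∀ k, MemLp (fun ω => Z ω k) 2 μ := fun k =>
    (ContinuousLinearMap.proj (R := ℝ) (φ := fun _ : n => ℝ) k).comp_memLp' hZ
  exact (hcoord i).integrable_mul (hcoord j)

theorem integrable_dotProduct_sq (hZ : MemLp Z 2 μ) (b : n → ℝ) :
    Integrable (fun ω => (b ⬝ᵥ Z ω) ^ 2) μ := by
  have hb : MemLp (fun ω => b ⬝ᵥ Z ω) 2 μ :=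
    (LinearMap.toContinuousLinearMap (dotProductBilin ℝ ℝ b)).comp_memLp' hZ
  exact hb.integrable_sq

theorem integral_dotProduct_sq (hZ : MemLp Z 2 μ) (b : n → ℝ) :
    ∫ ω, (b ⬝ᵥ Z ω) ^ 2 ∂μ = b ᵥ* secondMoment μ Z ⬝ᵥ b := by
  have hint : ∀ k l, Integrable (fun ω => b l * b k * (Z ω l * Z ω k)) μ := fun k l =>
    (integrable_mul_apply_of_memLp hZ l k).const_mul _
  calc ∫ ω, (b ⬝ᵥ Z ω) ^ 2 ∂μ = ∫ ω, ∑ k, ∑ l, b l * b k * (Z ω l * Z ω k) ∂μ := by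
        congr 1 with ω
        simp only [dotProduct, sq, Finset.sum_mul_sum]
        rw [Finset.sum_comm]
        exact Finset.sum_congr rfl fun _ _ => Finset.sum_congr rfl fun _ _ => by ring
    _ = ∑ k, ∑ l, b l * b k * ∫ ω, Z ω l * Z ω k ∂μ := by
        rw [integral_finsetSum _ fun k _ => integrable_finsetSum _ fun l _ => hint k l]
        refine Finset.sum_congr rfl fun k _ => ?_
        rw [integral_finsetSum _ fun l _ => hint k l]
        simp only [integral_const_mul]
    _ = b ᵥ* secondMoment μ Z ⬝ᵥ b := by
        simp only [dotProduct, vecMul, secondMoment, Matrix.of_apply, Finset.sum_mul]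
        exact Finset.sum_congr rfl fun _ _ => Finset.sum_congr rfl fun _ _ => by ring

theorem ae_dotProduct_eq_zero_of_vecMul_secondMoment (hZ : MemLp Z 2 μ) {b : n → ℝ}
    (hb : b ᵥ* secondMoment μ Z = 0) : ∀ᵐ ω ∂μ, b ⬝ᵥ Z ω = 0 := by
  have hzero : ∫ ω, (b ⬝ᵥ Z ω) ^ 2 ∂μ = 0 := by
    rw [integral_dotProduct_sq hZ, hb, zero_dotProduct]
  filter_upwards [(integral_eq_zero_iff_of_nonneg (fun _ => sq_nonneg _)
    (integrable_dotProduct_sq hZ b)).mp hzero] with ω hω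
  exact pow_eq_zero_iff two_ne_zero |>.mp hω

theorem ae_mulVec_eq_zero_of_mul_secondMoment (hZ : MemLp Z 2 μ) {B : Matrix m n ℝ}
    (hB : B * secondMoment μ Z = 0) : ∀ᵐ ω ∂μ, B *ᵥ Z ω = 0 := by
  have hrows : ∀ i, ∀ᵐ ω ∂μ, B i ⬝ᵥ Z ω = 0 := fun i =>
    ae_dotProduct_eq_zero_of_vecMul_secondMoment hZ (congrFun hB i)
  filter_upwards [ae_all_iff.mpr hrows] with ω hω
  exact funext hω

end SecondMoment

theorem stmt_5_general {Ω : Type*} [MeasurableSpace Ω]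
    (μ : Measure Ω) [IsProbabilityMeasure μ]
    {p d : ℕ} (X : Ω → (Fin p → ℝ))
    (hX2 : MemLp X 2 μ)
    (Sig : Matrix (Fin p) (Fin p) ℝ)
    (hSigpd : Sig.PosDef)
    (Y : Ω → ℝ)
    (Z : Ω → (Fin p → ℝ)) (hZ2 : MemLp Z 2 μ)
    (hZ : Z =ᵐ[μ] μ[X | MeasurableSpace.comap Y inferInstance])
    (AIR : Matrix (Fin p) (Fin p) ℝ)
    (hAIR : AIR = Sig⁻¹ * Matrix.of (fun i j => ∫ ω, Z ω i * Z ω j ∂μ) * Sig⁻¹)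
    (ξ : Matrix (Fin p) (Fin d) ℝ)
    (hspan : LinearMap.range ξ.mulVecLin = LinearMap.range AIR.mulVecLin)
    (hξ : IsUnit (ξ.transpose * Sig * ξ).det)
    (hlcm : μ[X | MeasurableSpace.comap (fun ω => ξ.transpose.mulVec (X ω)) inferInstance]
      =ᵐ[μ] fun ω =>
        (ξ * (ξ.transpose * Sig * ξ)⁻¹ * ξ.transpose * Sig).transpose.mulVec (X ω)) :
    μ[X | MeasurableSpace.comap Y inferInstance] =ᵐ[μ]
      μ[ μ[X | MeasurableSpace.comap (fun ω => ξ.transpose.mulVec (X ω)) inferInstance]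
         | MeasurableSpace.comap Y inferInstance] := by
  set Pt := (weightedProj Sig ξ)ᵀ
  have hSig : IsUnit Sig.det := hSigpd.det_pos.ne'.isUnit
  have hM : secondMoment μ Z = Sig * AIR * Sig := by
    rw [hAIR, ← Matrix.mul_assoc, ← Matrix.mul_assoc, mul_nonsing_inv _ hSig, Matrix.one_mul,
      Matrix.mul_assoc, nonsing_inv_mul _ hSig, Matrix.mul_one]
    rfl
  have hPtM : Pt * secondMoment μ Z = secondMoment μ Z := by
    rw [hM, ← Matrix.mul_assoc, ← Matrix.mul_assoc,
      transpose_weightedProj_mul (isHermitian_iff_isSymm.mp hSigpd.isHermitian),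
      Matrix.mul_assoc Sig, weightedProj_mul_of_range_le hξ hspan.ge]
  have hPtZ : ∀ᵐ ω ∂μ, Pt *ᵥ Z ω = Z ω := by
    filter_upwards [ae_mulVec_eq_zero_of_mul_secondMoment hZ2 (B := 1 - Pt)
      (by rw [Matrix.sub_mul, Matrix.one_mul, hPtM, sub_self])] with ω hω
    rwa [sub_mulVec, one_mulVec, sub_eq_zero, eq_comm] at hω
  calc μ[X | MeasurableSpace.comap Y inferInstance] =ᵐ[μ] Z := hZ.symm
    _ =ᵐ[μ] fun ω => Pt *ᵥ Z ω := hPtZ.mono fun _ h => h.symm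
    _ =ᵐ[μ] fun ω => Pt *ᵥ μ[X | MeasurableSpace.comap Y inferInstance] ω :=
      hZ.fun_comp (Pt *ᵥ ·)
    _ =ᵐ[μ] μ[fun ω => Pt *ᵥ X ω | MeasurableSpace.comap Y inferInstance] :=
      (LinearMap.toContinuousLinearMap Pt.mulVecLin).comp_condExp_comm (hX2.integrable one_le_two)
    _ =ᵐ[μ] _ := (condExp_congr_ae hlcm).symm

/-- Theorem 2.1, part 2, inclusion `S_CSS ⊆ S_IR`: if `ξ` spans the column space of the
inverse regression matrix `A_IR = Σ⁻¹E[ZZᵀ]Σ⁻¹` (with `Z` a version of `E[X|σ(Y)]`) and the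
linear conditional mean holds for `ξ`, then `ξ` solves the inverse regression equation
`E[X | σ(Y)] = E[ E[X | σ(ξᵀX)] | σ(Y) ]` a.e. -/
theorem stmt_5 {Ω : Type*} [MeasurableSpace Ω]
    (μ : Measure Ω) [IsProbabilityMeasure μ]
    {p d : ℕ} (X : Ω → (Fin p → ℝ)) (hX : Measurable X)
    (hX2 : MemLp X 2 μ) (hmean : ∫ ω, X ω ∂μ = 0)
    (Sig : Matrix (Fin p) (Fin p) ℝ)
    (hSig : ∀ i j, Sig i j = ∫ ω, X ω i * X ω j ∂μ)
    (hSigpd : Sig.PosDef)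
    (Y : Ω → ℝ) (hY : Measurable Y)
    (Z : Ω → (Fin p → ℝ)) (hZ2 : MemLp Z 2 μ)
    (hZ : Z =ᵐ[μ] μ[X | MeasurableSpace.comap Y inferInstance])
    (AIR : Matrix (Fin p) (Fin p) ℝ)
    (hAIR : AIR = Sig⁻¹ * Matrix.of (fun i j => ∫ ω, Z ω i * Z ω j ∂μ) * Sig⁻¹)
    (ξ : Matrix (Fin p) (Fin d) ℝ)
    (hspan : LinearMap.range ξ.mulVecLin = LinearMap.range AIR.mulVecLin)
    (hξ : IsUnit (ξ.transpose * Sig * ξ).det)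
    (hlcm : μ[X | MeasurableSpace.comap (fun ω => ξ.transpose.mulVec (X ω)) inferInstance]
      =ᵐ[μ] fun ω =>
        (ξ * (ξ.transpose * Sig * ξ)⁻¹ * ξ.transpose * Sig).transpose.mulVec (X ω)) :
    μ[X | MeasurableSpace.comap Y inferInstance] =ᵐ[μ]
      μ[ μ[X | MeasurableSpace.comap (fun ω => ξ.transpose.mulVec (X ω)) inferInstance]
         | MeasurableSpace.comap Y inferInstance] :=
  stmt_5_general μ X hX2 Sig hSigpd Y Z hZ2 hZ AIR hAIR ξ hspan hξ hlcm
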